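/- Let k be algebraically closed with char k ≠ 2, 3. Every pair (C, L) with C an irreducible cuspidal plane cubic and L a line that is 2-tangent to C at a smooth point (tangent but not triply tangent, and avoiding the cusp) is PGL(3)-equivalent to (V(x₀²x₂ + x₁²(x₀ + x₁)), V(x₂)). -/

import Mathlib

/-!
In suitable coordinates the cubic is `V(x₀²x₂ + x₁³)`, whose smooth points are the points
`(1 : t : -t³)`, with tangent line `-2t³x₀ + 3t²x₁ + x₂ = 0`. At `t = 0` this is the
inflectional tangent `x₂ = 0`, which meets the cubic only at its point of contact, so a
2-tangent line has `t ≠ 0`. For `t ≠ 0` the explicit matrix `cuspMatrix t` (invertible since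
`char k ≠ 3`) transforms `x₀²x₂ + x₁³` into a multiple of `x₀²x₂ + x₁²(x₀ + x₁)` and the
tangent line at `(1 : t : -t³)` into a multiple of `x₂`.
-/

open Matrix

namespace MvPolynomial

variable {R σ : Type*} [CommSemiring R]

theorem pderiv_aeval {τ : Type*} [Fintype σ] [DecidableEq σ] [DecidableEq τ]
    (f : σ → MvPolynomial τ R) (i : τ) (P : MvPolynomial σ R) :
    pderiv i (aeval f P) = ∑ j, aeval f (pderiv j P) * pderiv i (f j) := by
  induction P using MvPolynomial.induction_on with
  | C a => simp
  | add p q hp hq => simp only [map_add, hp, hq, Finset.sum_add_distrib, add_mul]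
  | mul_X p n hp =>
    simp only [map_mul, aeval_X, pderiv_mul, hp, pderiv_X, map_add, add_mul,
      Finset.sum_add_distrib, Finset.sum_mul, Pi.single_apply, apply_ite (aeval f), map_zero,
      mul_ite, mul_one, mul_zero, ite_mul, zero_mul, Finset.sum_ite_eq, Finset.mem_univ,
      if_true]
    simp only [mul_right_comm]

noncomputable def gradientAt [DecidableEq σ] (P : MvPolynomial σ R) (v : σ → R) : σ → R :=
  fun i => eval v (pderiv i P)

theorem gradientAt_smul [DecidableEq σ] (c : R) (P : MvPolynomial σ R) (v : σ → R) :
    gradientAt (c • P) v = c • gradientAt P v := by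
  ext i
  simp [gradientAt]

variable [Fintype σ]

theorem pderiv_linearForm [DecidableEq σ] (b : σ → R) (i : σ) :
    pderiv i (∑ j, C (b j) * X j) = C (b i) := by
  simp [pderiv_X, Pi.single_apply]

noncomputable def linSubst (A : Matrix σ σ R) : MvPolynomial σ R →ₐ[R] MvPolynomial σ R :=
  aeval fun i => ∑ j, C (A i j) * X j

theorem linSubst_X (A : Matrix σ σ R) (i : σ) : linSubst A (X i) = ∑ j, C (A i j) * X j :=
  aeval_X _ _

theorem linSubst_linSubst (A B : Matrix σ σ R) (P : MvPolynomial σ R) :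
    linSubst B (linSubst A P) = linSubst (A * B) P := by
  rw [← AlgHom.comp_apply]
  congr 1
  refine algHom_ext fun i => ?_
  simp only [AlgHom.comp_apply, linSubst_X, map_sum, map_mul, algHom_C, Matrix.mul_apply,
    Finset.mul_sum, Finset.sum_mul, ← mul_assoc]
  rw [Finset.sum_comm]
  simp [mul_assoc]

theorem eval_linSubst (A : Matrix σ σ R) (v : σ → R) (P : MvPolynomial σ R) :
    eval v (linSubst A P) = eval (A *ᵥ v) P := by
  induction P using MvPolynomial.induction_on with
  | C a => simp [linSubst]
  | add p q hp hq => simp [hp, hq]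
  | mul_X p n hp => simp [hp, linSubst_X, Matrix.mulVec, dotProduct]

theorem linSubst_linearForm (A : Matrix σ σ R) (b : σ → R) :
    linSubst A (∑ j, C (b j) * X j) = ∑ i, C ((b ᵥ* A) i) * X i := by
  simp [linSubst_X, Finset.mul_sum, Finset.sum_mul, Matrix.vecMul, dotProduct, ← mul_assoc]
  rw [Finset.sum_comm]

theorem pderiv_linSubst [DecidableEq σ] (A : Matrix σ σ R) (i : σ) (P : MvPolynomial σ R) :
    pderiv i (linSubst A P) = ∑ j, linSubst A (pderiv j P) * C (A j i) := by
  simp only [linSubst, pderiv_aeval, pderiv_linearForm]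

theorem gradientAt_linSubst [DecidableEq σ] (A : Matrix σ σ R) (P : MvPolynomial σ R)
    (v : σ → R) : gradientAt (linSubst A P) v = gradientAt P (A *ᵥ v) ᵥ* A := by
  ext i
  simp [gradientAt, pderiv_linSubst, eval_linSubst, Matrix.vecMul, dotProduct]

theorem eval_eq_zero_iff_of_linSubst_eq_smul {K : Type*} [Field K] {A : Matrix σ σ K}
    {F G : MvPolynomial σ K} {c : K} (hc : c ≠ 0) (hFG : linSubst A F = c • G) (v : σ → K) :
    eval v G = 0 ↔ eval (A *ᵥ v) F = 0 := by
  rw [← eval_linSubst, hFG, smul_eval, mul_eq_zero, or_iff_right hc]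

end MvPolynomial

open MvPolynomial

section CuspidalCubic

variable {R : Type*} [CommRing R]

noncomputable def cuspCubic : MvPolynomial (Fin 3) R := X 0 ^ 2 * X 2 + X 1 ^ 3

theorem eval_cuspCubic (v : Fin 3 → R) : eval v cuspCubic = v 0 ^ 2 * v 2 + v 1 ^ 3 := by
  simp [cuspCubic]

theorem gradientAt_cuspCubic (v : Fin 3 → R) :
    gradientAt cuspCubic v = ![2 * v 0 * v 2, 3 * v 1 ^ 2, v 0 ^ 2] := by
  ext i
  fin_cases i <;> simp [gradientAt, cuspCubic, pderiv_X]
  ring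

/-- Its first column is the point `(1, t, -t³)` of `cuspCubic`. -/
def cuspMatrix (t : R) : Matrix (Fin 3) (Fin 3) R :=
  !![1, 0, 0; t, 3 * t, 0; -t ^ 3, -(9 * t ^ 3), 27 * t ^ 3]

theorem det_cuspMatrix (t : R) : (cuspMatrix t).det = (3 * t) ^ 4 := by
  simp [cuspMatrix, Matrix.det_fin_three]
  ring

theorem linSubst_cuspMatrix_cuspCubic (t : R) :
    linSubst (cuspMatrix t) cuspCubic
      = (3 * t) ^ 3 • (X 0 ^ 2 * X 2 + X 1 ^ 2 * (X 0 + X 1) : MvPolynomial (Fin 3) R) := by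
  simp [cuspCubic, cuspMatrix, linSubst_X, Fin.sum_univ_three, smul_eq_C_mul, map_ofNat]
  ring

theorem vecMul_cuspMatrix (t : R) :
    ![-2 * t ^ 3, 3 * t ^ 2, 1] ᵥ* cuspMatrix t = ![0, 0, (3 * t) ^ 3] := by
  ext i
  fin_cases i <;> simp [cuspMatrix, Matrix.vecMul, dotProduct, Fin.sum_univ_three] <;> ring

variable {k : Type*} [Field k]

theorem isUnit_cuspMatrix {t : k} (h3 : (3 : k) ≠ 0) (ht : t ≠ 0) : IsUnit (cuspMatrix t) := by
  rw [Matrix.isUnit_iff_isUnit_det, det_cuspMatrix, isUnit_iff_ne_zero]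
  exact pow_ne_zero 4 (mul_ne_zero h3 ht)

theorem exists_eq_smul_of_eval_cuspCubic_eq_zero {u : Fin 3 → k}
    (hu : eval u cuspCubic = 0) (hsm : gradientAt cuspCubic u ≠ 0) :
    ∃ s t : k, s ≠ 0 ∧ u = s • ![1, t, -t ^ 3] := by
  rw [eval_cuspCubic] at hu
  have hu0 : u 0 ≠ 0 := by
    intro h0
    have h1 : u 1 = 0 := by simpa [h0] using hu
    exact hsm (by simp [gradientAt_cuspCubic, h0, h1])
  refine ⟨u 0, u 1 / u 0, hu0, ?_⟩
  ext i
  fin_cases i <;> simp <;> field_simp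
  linear_combination hu

theorem gradientAt_cuspCubic_smul (s t : k) :
    gradientAt cuspCubic (s • ![1, t, -t ^ 3]) = s ^ 2 • ![-2 * t ^ 3, 3 * t ^ 2, 1] := by
  ext i
  fin_cases i <;> simp [gradientAt_cuspCubic] <;> ring

theorem eq_smul_of_eval_cuspCubic_eq_zero {w : Fin 3 → k} (hw : eval w cuspCubic = 0)
    (h2 : w 2 = 0) : w = w 0 • ![1, 0, 0] := by
  have h1 : w 1 = 0 := by simpa [eval_cuspCubic, h2] using hw
  ext i
  fin_cases i <;> simp [h1, h2]

theorem exists_cuspMatrix_vecMul_eq {u ℓ : Fin 3 → k} {e : k} (h3 : (3 : k) ≠ 0)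
    (hu : eval u cuspCubic = 0) (hsm : gradientAt cuspCubic u ≠ 0) (he : e ≠ 0)
    (hℓ : ℓ = e • gradientAt cuspCubic u)
    (hmeet : ∃ w, eval w cuspCubic = 0 ∧ ℓ ⬝ᵥ w = 0 ∧ ∀ c : k, w ≠ c • u) :
    ∃ t : k, t ≠ 0 ∧ ∃ μ : k, μ ≠ 0 ∧ ℓ ᵥ* cuspMatrix t = ![0, 0, μ] := by
  obtain ⟨s, t, hs, rfl⟩ := exists_eq_smul_of_eval_cuspCubic_eq_zero hu hsm
  rw [gradientAt_cuspCubic_smul, smul_smul] at hℓ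
  obtain ⟨w, hwC, hwℓ, hwu⟩ := hmeet
  have ht : t ≠ 0 := by
    rintro rfl
    have hw2 : w 2 = 0 := by simpa [hℓ, dotProduct, Fin.sum_univ_three, he, hs] using hwℓ
    apply hwu (w 0 / s)
    rw [eq_smul_of_eval_cuspCubic_eq_zero hwC hw2, smul_smul, div_mul_cancel₀ _ hs]
    simp
  refine ⟨t, ht, e * s ^ 2 * (3 * t) ^ 3, by simp [he, hs, h3, ht], ?_⟩
  rw [hℓ, smul_vecMul, vecMul_cuspMatrix]
  simp

end CuspidalCubic

theorem stmt10 {k : Type*} [Field k]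
    (h3 : (3 : k) ≠ 0)
    (F : MvPolynomial (Fin 3) k) (b : Fin 3 → k)
    -- C is an irreducible cuspidal cubic: PGL(3)-equivalent to V(x₀²x₂ + x₁³)
    (hcusp : ∃ (h : Matrix (Fin 3) (Fin 3) k) (c : k), IsUnit h ∧ c ≠ 0 ∧
      aeval (R := k) (fun i => ∑ j, C (h i j) * X j) F
        = c • (X 0 ^ 2 * X 2 + X 1 ^ 3 : MvPolynomial (Fin 3) k))
    -- L is tangent to C at a smooth point p, but not triply tangent
    (p : Fin 3 → k) (hpC : eval p F = 0)
    (hsm : (fun i => eval p (pderiv i F)) ≠ 0)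
    (htan : ∃ c : k, c ≠ 0 ∧ (fun i => eval p (pderiv i F)) = c • b)
    (hnot3 : ∃ q : Fin 3 → k, q ≠ 0 ∧ eval q F = 0 ∧ ∑ i, b i * q i = 0 ∧
      ∀ c : k, q ≠ c • p) :
    ∃ g : Matrix (Fin 3) (Fin 3) k, IsUnit g ∧ ∃ c d : k, c ≠ 0 ∧ d ≠ 0 ∧
      aeval (R := k) (fun i => ∑ j, C (g i j) * X j) F
        = c • (X 0 ^ 2 * X 2 + X 1 ^ 2 * (X 0 + X 1) : MvPolynomial (Fin 3) k) ∧
      aeval (R := k) (fun i => ∑ j, C (g i j) * X j) (∑ j, C (b j) * X j)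
        = d • (X 2 : MvPolynomial (Fin 3) k) := by
  obtain ⟨h, c, hh, hc, hFG⟩ := hcusp
  obtain ⟨a, ha, hgrad⟩ := htan
  obtain ⟨q, -, hqC, hqL, hqp⟩ := hnot3
  change linSubst h F = c • cuspCubic at hFG
  change gradientAt F p ≠ 0 at hsm
  change gradientAt F p = a • b at hgrad
  have hinv (v : Fin 3 → k) : h *ᵥ (h⁻¹ *ᵥ v) = v := by
    rw [mulVec_mulVec, mul_nonsing_inv _ ((isUnit_iff_isUnit_det h).mp hh), one_mulVec]
  have hmem (v : Fin 3 → k) : eval (h⁻¹ *ᵥ v) cuspCubic = 0 ↔ eval v F = 0 := by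
    rw [eval_eq_zero_iff_of_linSubst_eq_smul hc hFG, hinv]
  have hgradG : c • gradientAt cuspCubic (h⁻¹ *ᵥ p) = gradientAt F p ᵥ* h := by
    rw [← gradientAt_smul, ← hFG, gradientAt_linSubst, hinv]
  obtain ⟨t, ht, μ, hμ, hline⟩ := exists_cuspMatrix_vecMul_eq h3 ((hmem p).2 hpC)
    (fun h0 => hsm <| vecMul_injective_of_isUnit hh <|
      show gradientAt F p ᵥ* h = 0 ᵥ* h by rw [← hgradG, h0, smul_zero, zero_vecMul])
    (div_ne_zero hc ha)
    (by rw [div_eq_inv_mul, mul_smul, hgradG, hgrad, smul_vecMul, inv_smul_smul₀ ha])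
    ⟨h⁻¹ *ᵥ q, (hmem q).2 hqC, by rwa [← dotProduct_mulVec, hinv],
      fun c hcq => hqp c (by rw [← hinv q, hcq, mulVec_smul, hinv])⟩
  refine ⟨h * cuspMatrix t, hh.mul (isUnit_cuspMatrix h3 ht), c * (3 * t) ^ 3, μ,
    by simp [hc, h3, ht], hμ, ?_, ?_⟩
  · change linSubst (h * cuspMatrix t) F = _
    rw [← linSubst_linSubst, hFG, map_smul, linSubst_cuspMatrix_cuspCubic, smul_smul]
  · change linSubst (h * cuspMatrix t) _ = _
    rw [linSubst_linearForm, ← vecMul_vecMul, hline]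
    simp [Fin.sum_univ_three, smul_eq_C_mul]
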